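/- arXiv:1608.03451 — 3 statements merged into one kernel-verified Lean document; each statement's English description precedes it below -/
import Mathlib

section
/- For every real x ≥ 0, the one-dimensional Lebesgue constant of the symmetric interval satisfies L({γ ∈ ℤ : |γ| ≤ x}) ≥ (1/π)·max{ln(x+1), 1}. -/
/-!
With `n = ⌊x⌋`, test the Dirichlet kernel `Dₙ(t) = ∑_{|γ| ≤ n} e^{iγt}` against the
unimodular function `e^{-i(n+1/2)|t|}`. Since `cos((γ ± (n + 1/2))π) = 0` for every integer `γ`,
the frequency `γ` contributes exactly `-(1/(n + 1/2 + γ) + 1/(n + 1/2 - γ))` to the imaginary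
part of `∫_{-π}^{π} Dₙ(t) e^{-i(n+1/2)|t|} dt`, so `2π L ≥ 2 ∑_{k=0}^{2n} 1/(k + 1/2)`.
This sum dominates both the harmonic number `H_{2n+1} ≥ ln(2n + 2) ≥ ln(x + 1)` and its
first term `2`.
-/

/-- The one-dimensional Lebesgue constant of a finite set `Γ ⊂ ℤ`. -/
noncomputable def FL1 (Γ : Finset ℤ) : ℝ :=
  (2 * Real.pi)⁻¹ *
    ∫ t in Set.Ico (-Real.pi) Real.pi,
      ‖∑ γ ∈ Γ, Complex.exp (Complex.I * (γ : ℂ) * (t : ℂ))‖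

open Complex Finset Real intervalIntegral MeasureTheory

lemma im_integral_exp_I_mul {c : ℝ} (hc : c ≠ 0) (a b : ℝ) :
    (∫ t in a..b, cexp (I * c * t)).im = (Real.cos (c * a) - Real.cos (c * b)) / c := by
  have hIc : I * c ≠ 0 := by simp [hc]
  rw [integral_exp_mul_complex hIc]
  have hrot : ∀ s : ℝ, I * c * s = ((c * s : ℝ) : ℂ) * I := fun s => by push_cast; ring
  rw [hrot, hrot, div_im]
  simp only [exp_ofReal_mul_I_re, exp_ofReal_mul_I_im, mul_im, mul_re, I_re, I_im, ofReal_re,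
    ofReal_im, sub_re, sub_im, normSq_apply]
  field_simp
  ring

lemma cos_int_add_mul_pi_eq_zero {N : ℝ} (hN : Real.cos (N * π) = 0) (γ : ℤ) :
    Real.cos ((γ + N) * π) = 0 := by
  rw [add_mul, Real.cos_add, hN, Real.sin_int_mul_pi]
  ring

lemma ne_zero_of_cos_mul_pi_eq_zero {c : ℝ} (hc : Real.cos (c * π) = 0) : c ≠ 0 := by
  rintro rfl
  simp at hc

lemma im_integral_exp_I_mul_zero_pi {c : ℝ} (hc : Real.cos (c * π) = 0) :
    (∫ t in 0..π, cexp (I * c * t)).im = c⁻¹ := by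
  rw [im_integral_exp_I_mul (ne_zero_of_cos_mul_pi_eq_zero hc), hc]
  simp

lemma im_integral_exp_I_mul_neg_pi_zero {c : ℝ} (hc : Real.cos (c * π) = 0) :
    (∫ t in (-π)..0, cexp (I * c * t)).im = -c⁻¹ := by
  rw [im_integral_exp_I_mul (ne_zero_of_cos_mul_pi_eq_zero hc), mul_neg, Real.cos_neg, hc]
  simp [neg_div]

lemma im_integral_exp_mul_exp_neg_abs {N : ℝ} (hN : Real.cos (N * π) = 0) (γ : ℤ) :
    (∫ t in (-π)..π, cexp (I * γ * t) * cexp (-(I * N * |t|))).im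
      = -((N + γ)⁻¹ + (N - γ)⁻¹) := by
  have hintegrable : ∀ a b : ℝ, IntervalIntegrable
      (fun t : ℝ => cexp (I * γ * t) * cexp (-(I * N * |t|))) volume a b :=
    fun a b => by apply Continuous.intervalIntegrable; fun_prop
  have hleft : ∫ t in (-π)..0, cexp (I * γ * t) * cexp (-(I * N * |t|))
      = ∫ t in (-π)..0, cexp (I * (γ + N : ℝ) * t) := by
    refine integral_congr fun t ht => ?_
    rw [Set.uIcc_of_le (by linarith [pi_pos])] at ht
    simp only [abs_of_nonpos ht.2, ← Complex.exp_add]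
    push_cast
    ring_nf
  have hright : ∫ t in 0..π, cexp (I * γ * t) * cexp (-(I * N * |t|))
      = ∫ t in 0..π, cexp (I * (γ - N : ℝ) * t) := by
    refine integral_congr fun t ht => ?_
    rw [Set.uIcc_of_le pi_pos.le] at ht
    simp only [abs_of_nonneg ht.1, ← Complex.exp_add]
    push_cast
    ring_nf
  have hsub : Real.cos ((γ - N : ℝ) * π) = 0 := by
    rw [← Real.cos_neg, ← cos_int_add_mul_pi_eq_zero hN (-γ)]
    push_cast
    ring_nf
  rw [← integral_add_adjacent_intervals (hintegrable _ _) (hintegrable _ _), add_im,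
    hleft, hright,
    im_integral_exp_I_mul_neg_pi_zero (cos_int_add_mul_pi_eq_zero hN γ),
    im_integral_exp_I_mul_zero_pi hsub, ← neg_sub N, inv_neg, add_comm N]
  ring

lemma sum_Icc_neg_comp_neg {M : Type*} [AddCommMonoid M] (n : ℤ) (f : ℤ → M) :
    ∑ γ ∈ Icc (-n) n, f (-γ) = ∑ γ ∈ Icc (-n) n, f γ :=
  sum_nbij' Neg.neg Neg.neg (fun a ha => by simp only [mem_Icc] at ha ⊢; omega)
    (fun a ha => by simp only [mem_Icc] at ha ⊢; omega) (by simp) (by simp) (by simp)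

lemma sum_Icc_neg_comp_add {M : Type*} [AddCommMonoid M] (n : ℕ) (f : ℤ → M) :
    ∑ γ ∈ Icc (-(n : ℤ)) n, f (n + γ) = ∑ k ∈ range (2 * n + 1), f k := by
  refine sum_nbij' (fun γ => (n + γ).toNat) (fun k => k - n) ?_ ?_ ?_ ?_ ?_
  all_goals intro a ha
  all_goals simp only [mem_Icc, mem_range] at ha ⊢
  all_goals try omega
  rw [Int.toNat_of_nonneg (by omega)]

lemma log_add_one_le_sum_inv_add_half (K : ℕ) :
    Real.log (K + 1) ≤ ∑ k ∈ range K, ((k : ℝ) + 1 / 2)⁻¹ :=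
  calc Real.log (K + 1) ≤ harmonic K := by exact_mod_cast log_add_one_le_harmonic K
    _ = ∑ k ∈ range K, ((k : ℝ) + 1)⁻¹ := by simp [harmonic]
    _ ≤ ∑ k ∈ range K, ((k : ℝ) + 1 / 2)⁻¹ :=
        sum_le_sum fun k _ => inv_anti₀ (by positivity) (by linarith)

lemma norm_integral_mul_le_two_pi_mul_FL1 (Γ : Finset ℤ) {g : ℝ → ℂ}
    (hg : ∀ t, ‖g t‖ ≤ 1) :
    ‖∫ t in (-π)..π, (∑ γ ∈ Γ, cexp (I * γ * t)) * g t‖ ≤ 2 * π * FL1 Γ := by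
  set S : ℝ → ℂ := fun t => ∑ γ ∈ Γ, cexp (I * γ * t)
  have hS : Continuous S := by fun_prop
  rw [FL1, ← mul_assoc, mul_inv_cancel₀ (by positivity), one_mul,
    setIntegral_congr_set Ico_ae_eq_Ioc, ← integral_of_le (by linarith [pi_pos])]
  calc ‖∫ t in (-π)..π, S t * g t‖ ≤ ∫ t in (-π)..π, ‖S t * g t‖ :=
        norm_integral_le_integral_norm (by linarith [pi_pos])
    _ ≤ ∫ t in (-π)..π, ‖S t‖ := by
        rw [integral_of_le (by linarith [pi_pos]), integral_of_le (by linarith [pi_pos])]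
        refine setIntegral_mono_of_nonneg (fun t _ => norm_nonneg _) (fun t _ => ?_)
          (hS.norm.integrableOn_Icc.mono_set Set.Ioc_subset_Icc_self)
        rw [norm_mul]
        exact mul_le_of_le_one_right (norm_nonneg _) (hg t)

lemma im_integral_dirichlet_mul_exp_neg_abs (n : ℕ) :
    (∫ t in (-π)..π, (∑ γ ∈ Icc (-(n : ℤ)) n, cexp (I * γ * t))
        * cexp (-(I * (n + 1 / 2 : ℝ) * |t|))).im
      = -(2 * ∑ k ∈ range (2 * n + 1), ((k : ℝ) + 1 / 2)⁻¹) := by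
  have hN : Real.cos ((n + 1 / 2 : ℝ) * π) = 0 := by
    rw [add_mul, Real.cos_add, Real.cos_nat_mul_pi, Real.sin_nat_mul_pi, one_div_mul_eq_div,
      Real.cos_pi_div_two]
    ring
  simp_rw [sum_mul]
  rw [intervalIntegral.integral_finsetSum
    (fun γ _ => by apply Continuous.intervalIntegrable; fun_prop), im_sum]
  simp_rw [im_integral_exp_mul_exp_neg_abs hN, sum_neg_distrib, sum_add_distrib]
  rw [← sum_Icc_neg_comp_neg (n : ℤ) (fun γ : ℤ => ((n + 1 / 2 : ℝ) - γ)⁻¹)]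
  have hshift := sum_Icc_neg_comp_add n (fun k : ℤ => ((k : ℝ) + 1 / 2)⁻¹)
  push_cast at hshift ⊢
  simp_rw [sub_neg_eq_add, ← hshift]
  ring_nf

theorem stmt_6 (x : ℝ) (hx : 0 ≤ x) :
    (1 / Real.pi) * max (Real.log (x + 1)) 1 ≤
      FL1 (Finset.Icc (-⌊x⌋) ⌊x⌋) := by
  lift ⌊x⌋ to ℕ using Int.floor_nonneg.mpr hx with n hn
  set R := ∑ k ∈ range (2 * n + 1), ((k : ℝ) + 1 / 2)⁻¹
  have hxn : x < n + 1 := by exact_mod_cast hn ▸ Int.lt_floor_add_one x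
  have hlog : Real.log (x + 1) ≤ R := by
    refine (Real.log_le_log (by linarith) ?_).trans (log_add_one_le_sum_inv_add_half _)
    push_cast
    linarith
  have hone : 1 ≤ R := by
    refine le_trans ?_
      (single_le_sum (fun k _ => by positivity) (mem_range.mpr (2 * n).succ_pos))
    norm_num
  have hpair : 2 * R ≤ 2 * π * FL1 (Icc (-(n : ℤ)) n) := by
    have hunimod : ∀ t : ℝ, ‖cexp (-(I * (n + 1 / 2 : ℝ) * |t|))‖ ≤ 1 := fun t => by
      rw [norm_exp]; simp
    have h := (neg_le_abs _).trans <| (abs_im_le_norm _).trans <|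
      norm_integral_mul_le_two_pi_mul_FL1 (Icc (-(n : ℤ)) n) hunimod
    rwa [im_integral_dirichlet_mul_exp_neg_abs, neg_neg] at h
  rw [one_div_mul_eq_div, div_le_iff₀' pi_pos]
  linarith [max_le hlog hone]
end

section
/- Let d ≥ 2, m ∈ ℕ^d, and set Γ̄^{(m)} = {γ ∈ ℕ₀^d : γ_i/m_i ≤ 1 ∀i, γ_i/m_i + γ_j/m_j ≤ 1 ∀ i≠j}, Γ₀ = {γ ∈ ℕ₀^d : 2γ_i ≤ m_i ∀i}, Γ₁ = {γ ∈ ℕ₀^d : 2γ_i < m_i ∀i}. For nonempty K ⊆ {1,…,d} let Γ₁^K = {γ ∈ Γ₁ : K equals the set of indices i achieving max_j γ_j/m_j}, and for k ∈ {1,…,d} let s_k(γ) be γ with its k-th coordinate replaced by m_k − γ_k. Then Γ̄^{(m)} is the disjoint union of Γ₀ and the sets s_k(Γ₁^K) over all nonempty K ⊆ {1,…,d} and all k ∈ K. -/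
/-- The polyhedral set `Γ̄^{(m)}` as a subset of `ℕ₀^d`. -/
def GammaBarS (d : ℕ) (m : Fin d → ℕ) : Set (Fin d → ℕ) :=
  {γ | (∀ i, (γ i : ℝ) / (m i) ≤ 1) ∧
    ∀ i j, i ≠ j → (γ i : ℝ) / (m i) + (γ j : ℝ) / (m j) ≤ 1}

/-- `Γ₀ = {γ : 2γᵢ ≤ mᵢ ∀ i}`. -/
def Gamma0 (d : ℕ) (m : Fin d → ℕ) : Set (Fin d → ℕ) := {γ | ∀ i, 2 * γ i ≤ m i}

/-- `Γ₁ = {γ : 2γᵢ < mᵢ ∀ i}`. -/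
def Gamma1 (d : ℕ) (m : Fin d → ℕ) : Set (Fin d → ℕ) := {γ | ∀ i, 2 * γ i < m i}

/-- The set of indices achieving `max_j γ_j/m_j`. -/
def maxIdx (d : ℕ) (m : Fin d → ℕ) (γ : Fin d → ℕ) : Set (Fin d) :=
  {i | ∀ j, (γ j : ℝ) / (m j) ≤ (γ i : ℝ) / (m i)}

/-- `Γ₁^K`. -/
def Gamma1K (d : ℕ) (m : Fin d → ℕ) (K : Set (Fin d)) : Set (Fin d → ℕ) :=
  {γ ∈ Gamma1 d m | maxIdx d m γ = K}

/-- The reflection `s_k` replacing the `k`-th coordinate `γ_k` by `m_k - γ_k`. -/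
def refl' (d : ℕ) (m : Fin d → ℕ) (k : Fin d) (γ : Fin d → ℕ) : Fin d → ℕ :=
  Function.update γ k (m k - γ k)

/-!
Write `x_i = γ_i / m_i`. A point of `Γ̄^{(m)}` has at most one coordinate with `x_k > 1/2`,
since two such coordinates would violate `x_i + x_j ≤ 1`; the points with none form `Γ₀`.
If `x_k > 1/2`, the involution `s_k`, which acts as `x_k ↦ 1 - x_k`, sends the point into `Γ₁`,
and the constraints `x_j + x_k ≤ 1` say exactly that `k` realises the maximum of the reflected
point. The sets `s_k(Γ₁^K)` are disjoint: `k` is the unique large coordinate of the image,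
and then `γ = s_k(s_k γ)` determines `K`.
-/

open Function

section Reflection

variable {d : ℕ} {m : Fin d → ℕ} {k : Fin d} {γ : Fin d → ℕ}

lemma refl'_apply_self : refl' d m k γ k = m k - γ k := update_self ..

lemma refl'_apply_of_ne {j : Fin d} (hj : j ≠ k) : refl' d m k γ j = γ j := update_of_ne hj ..

lemma refl'_refl' (h : γ k ≤ m k) : refl' d m k (refl' d m k γ) = γ := by
  ext j
  rcases eq_or_ne j k with rfl | hj
  · rw [refl'_apply_self, refl'_apply_self]
    omega
  · rw [refl'_apply_of_ne hj, refl'_apply_of_ne hj]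

lemma Gamma1K_subset_Gamma1 {K : Set (Fin d)} : Gamma1K d m K ⊆ Gamma1 d m := fun _ hγ => hγ.1

lemma Gamma1_subset_Gamma0 : Gamma1 d m ⊆ Gamma0 d m := fun _ hγ i => (hγ i).le

lemma le_of_mem_Gamma0 (hγ : γ ∈ Gamma0 d m) (i : Fin d) : γ i ≤ m i := by
  have := hγ i
  omega

lemma refl'_injOn_Gamma1 : Set.InjOn (refl' d m k) (Gamma1 d m) := by
  intro γ hγ γ' hγ' h
  rw [← refl'_refl' (le_of_mem_Gamma0 (Gamma1_subset_Gamma0 hγ) k), h,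
    refl'_refl' (le_of_mem_Gamma0 (Gamma1_subset_Gamma0 hγ') k)]

lemma lt_two_mul_refl'_apply_self (hγ : γ ∈ Gamma1 d m) : m k < 2 * refl' d m k γ k := by
  have := hγ k
  rw [refl'_apply_self]
  omega

lemma disjoint_Gamma0_image_refl' : Disjoint (Gamma0 d m) (refl' d m k '' Gamma1 d m) := by
  refine Set.disjoint_left.2 ?_
  rintro _ h0 ⟨γ, hγ, rfl⟩
  have := lt_two_mul_refl'_apply_self (k := k) hγ
  have := h0 k
  omega

lemma disjoint_image_refl'_of_ne {k' : Fin d} (hkk' : k ≠ k') :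
    Disjoint (refl' d m k '' Gamma1 d m) (refl' d m k' '' Gamma1 d m) := by
  refine Set.disjoint_left.2 ?_
  rintro _ ⟨γ, hγ, rfl⟩ ⟨γ', hγ', heq⟩
  have hk := congr_fun heq k
  rw [refl'_apply_of_ne hkk', refl'_apply_self] at hk
  have := hγ k
  have := hγ' k
  omega

end Reflection

section Ratios

lemma div_le_half_iff_two_mul_le {a n : ℕ} (hn : 0 < n) : (a : ℝ) / n ≤ 1 / 2 ↔ 2 * a ≤ n := by
  rw [div_le_iff₀ (by positivity), ← Nat.cast_le (α := ℝ)]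
  push_cast
  constructor <;> intro h <;> linarith

lemma div_lt_half_iff_two_mul_lt {a n : ℕ} (hn : 0 < n) : (a : ℝ) / n < 1 / 2 ↔ 2 * a < n := by
  rw [div_lt_iff₀ (by positivity), ← Nat.cast_lt (α := ℝ)]
  push_cast
  constructor <;> intro h <;> linarith

lemma cast_sub_div_self {a n : ℕ} (hn : 0 < n) (h : a ≤ n) :
    ((n - a : ℕ) : ℝ) / n = 1 - a / n := by
  rw [Nat.cast_sub h, sub_div, div_self (by positivity)]

variable {d : ℕ} {m : Fin d → ℕ} {k : Fin d} {γ : Fin d → ℕ}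

lemma mem_Gamma0_iff (hm : ∀ i, 0 < m i) :
    γ ∈ Gamma0 d m ↔ ∀ i, (γ i : ℝ) / m i ≤ 1 / 2 :=
  forall_congr' fun i => (div_le_half_iff_two_mul_le (hm i)).symm

lemma mem_Gamma1_iff (hm : ∀ i, 0 < m i) :
    γ ∈ Gamma1 d m ↔ ∀ i, (γ i : ℝ) / m i < 1 / 2 :=
  forall_congr' fun i => (div_lt_half_iff_two_mul_lt (hm i)).symm

lemma div_refl'_apply_self (hm : 0 < m k) (h : γ k ≤ m k) :
    (refl' d m k γ k : ℝ) / m k = 1 - γ k / m k := by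
  rw [refl'_apply_self, cast_sub_div_self hm h]

lemma le_of_mem_GammaBarS (hm : ∀ i, 0 < m i) (hγ : γ ∈ GammaBarS d m) (i : Fin d) :
    γ i ≤ m i :=
  Nat.cast_le.1 ((div_le_one (by exact_mod_cast hm i)).1 (hγ.1 i))

lemma Gamma0_subset_GammaBarS (hm : ∀ i, 0 < m i) : Gamma0 d m ⊆ GammaBarS d m := by
  intro γ hγ
  rw [mem_Gamma0_iff hm] at hγ
  exact ⟨fun i => by linarith [hγ i], fun i j _ => by linarith [hγ i, hγ j]⟩

lemma div_lt_half_of_mem_GammaBarS (hγ : γ ∈ GammaBarS d m) (hk : 1 / 2 < (γ k : ℝ) / m k)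
    {j : Fin d} (hj : j ≠ k) : (γ j : ℝ) / m j < 1 / 2 := by
  linarith [hγ.2 j k hj]

lemma refl'_mem_Gamma1 (hm : ∀ i, 0 < m i) (hγ : γ ∈ GammaBarS d m)
    (hk : 1 / 2 < (γ k : ℝ) / m k) : refl' d m k γ ∈ Gamma1 d m := by
  rw [mem_Gamma1_iff hm]
  intro j
  rcases eq_or_ne j k with rfl | hj
  · rw [div_refl'_apply_self (hm j) (le_of_mem_GammaBarS hm hγ j)]
    linarith
  · rw [refl'_apply_of_ne hj]
    exact div_lt_half_of_mem_GammaBarS hγ hk hj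

lemma mem_maxIdx_refl' (hm : ∀ i, 0 < m i) (hγ : γ ∈ GammaBarS d m) :
    k ∈ maxIdx d m (refl' d m k γ) := by
  intro j
  rw [div_refl'_apply_self (hm k) (le_of_mem_GammaBarS hm hγ k)]
  rcases eq_or_ne j k with rfl | hj
  · rw [div_refl'_apply_self (hm j) (le_of_mem_GammaBarS hm hγ j)]
  · rw [refl'_apply_of_ne hj]
    linarith [hγ.2 j k hj]

lemma refl'_mem_GammaBarS (hm : ∀ i, 0 < m i) (hγ : γ ∈ Gamma1 d m) (hk : k ∈ maxIdx d m γ) :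
    refl' d m k γ ∈ GammaBarS d m := by
  have hk' := div_refl'_apply_self (hm k) (le_of_mem_Gamma0 (Gamma1_subset_Gamma0 hγ) k)
  have hne : ∀ j ≠ k, (refl' d m k γ j : ℝ) / m j = γ j / m j := fun j hj => by
    rw [refl'_apply_of_ne hj]
  rw [mem_Gamma1_iff hm] at hγ
  have hnonneg : ∀ i, 0 ≤ (γ i : ℝ) / m i := fun i => by positivity
  refine ⟨fun i => ?_, fun i j hij => ?_⟩
  · rcases eq_or_ne i k with rfl | hi
    · linarith [hnonneg i]
    · linarith [hne i hi, hγ i]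
  · rcases eq_or_ne i k with rfl | hi
    · linarith [hne j hij.symm, hk j]
    rcases eq_or_ne j k with rfl | hj
    · linarith [hne i hi, hk i]
    · linarith [hne i hi, hne j hj, hγ i, hγ j]

end Ratios

theorem stmt_9_general (d : ℕ) (m : Fin d → ℕ) (hm : ∀ i, 0 < m i) :
    (GammaBarS d m =
      Gamma0 d m ∪
        ⋃ K ∈ {K : Set (Fin d) | K.Nonempty}, ⋃ k ∈ K,
          refl' d m k '' Gamma1K d m K) ∧
    (∀ K : Set (Fin d), K.Nonempty → ∀ k ∈ K,
      Disjoint (Gamma0 d m) (refl' d m k '' Gamma1K d m K)) ∧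
    (∀ K K' : Set (Fin d), K.Nonempty → K'.Nonempty → ∀ k ∈ K, ∀ k' ∈ K',
      (K, k) ≠ (K', k') →
        Disjoint (refl' d m k '' Gamma1K d m K) (refl' d m k' '' Gamma1K d m K')) := by
  refine ⟨?_, ?_, ?_⟩
  · ext γ
    simp only [Set.mem_union, Set.mem_iUnion, Set.mem_image, exists_prop]
    constructor
    · intro hγ
      by_cases h0 : γ ∈ Gamma0 d m
      · exact .inl h0
      obtain ⟨k, hk⟩ : ∃ k, 1 / 2 < (γ k : ℝ) / m k := by
        simpa [mem_Gamma0_iff hm] using h0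
      have hmax := mem_maxIdx_refl' (k := k) hm hγ
      exact .inr ⟨_, ⟨k, hmax⟩, k, hmax, _, ⟨refl'_mem_Gamma1 hm hγ hk, rfl⟩,
        refl'_refl' (le_of_mem_GammaBarS hm hγ k)⟩
    · rintro (h0 | ⟨K, -, k, hk, γ, ⟨hγ, rfl⟩, rfl⟩)
      · exact Gamma0_subset_GammaBarS hm h0
      · exact refl'_mem_GammaBarS hm hγ hk
  · exact fun K _ k _ =>
      disjoint_Gamma0_image_refl'.mono_right (Set.image_mono Gamma1K_subset_Gamma1)
  · rintro K K' - - k - k' - hne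
    rcases eq_or_ne k k' with rfl | hkk'
    · refine Set.disjoint_left.2 ?_
      rintro _ ⟨γ, ⟨hγ, rfl⟩, rfl⟩ ⟨γ', ⟨hγ', rfl⟩, heq⟩
      exact hne (by rw [refl'_injOn_Gamma1 hγ' hγ heq])
    · exact (disjoint_image_refl'_of_ne hkk').mono (Set.image_mono Gamma1K_subset_Gamma1)
        (Set.image_mono Gamma1K_subset_Gamma1)

theorem stmt_9 (d : ℕ) (hd : 2 ≤ d) (m : Fin d → ℕ) (hm : ∀ i, 0 < m i) :
    (GammaBarS d m =
      Gamma0 d m ∪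
        ⋃ K ∈ {K : Set (Fin d) | K.Nonempty}, ⋃ k ∈ K,
          refl' d m k '' Gamma1K d m K) ∧
    (∀ K : Set (Fin d), K.Nonempty → ∀ k ∈ K,
      Disjoint (Gamma0 d m) (refl' d m k '' Gamma1K d m K)) ∧
    (∀ K K' : Set (Fin d), K.Nonempty → K'.Nonempty → ∀ k ∈ K, ∀ k' ∈ K',
      (K, k) ≠ (K', k') →
        Disjoint (refl' d m k '' Gamma1K d m K) (refl' d m k' '' Gamma1K d m K')) :=
  stmt_9_general d m hm
end

section
/- Let r > 0, d ≥ 2, and m ∈ ℕ^d, and let K = {i : ln((r·m_i+1)/(4e^d)) ≥ 1} be nonempty. Then there exists k ∈ K such that ∫_0^{r m_k} (1/(v+1)) ∏_{i∈K∖{k}} ln((m_i v)/(2 m_k) + 1) dv ≥ (1/|K|) ∏_{i∈K} ln((r m_i)/2 + 1). -/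
/-!
The derivative of `u ↦ ∏ i ∈ K, log (m i * u / 2 + 1)` is
`∑ j ∈ K, (∏ i ∈ K.erase j, log (m i * u / 2 + 1)) * (m j / 2) / (m j * u / 2 + 1)`, and
`(m j / 2) / (m j * u / 2 + 1) ≤ m j / (m j * u + 1)`; after the substitution `v = m j * u` the
`j`-th term is bounded by the `j`-th integral of the statement. Integrating over `[0, r]`, the
integrals therefore sum to at least `∏ i ∈ K, log (r * m i / 2 + 1)`, and the largest of them is at
least the average.
-/

open Finset intervalIntegral MeasureTheory

theorem sum_integral_prod_erase_mul_deriv {ι : Type*} [DecidableEq ι] (K : Finset ι)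
    {f f' : ι → ℝ → ℝ} {a b : ℝ}
    (hf : ∀ i ∈ K, ∀ x ∈ Set.uIcc a b, HasDerivAt (f i) (f' i x) x)
    (hf' : ∀ i ∈ K, ContinuousOn (f' i) (Set.uIcc a b)) :
    ∑ j ∈ K, ∫ x in a..b, (∏ i ∈ K.erase j, f i x) * f' j x =
      ∏ i ∈ K, f i b - ∏ i ∈ K, f i a := by
  have hint : ∀ j ∈ K,
      IntervalIntegrable (fun x => (∏ i ∈ K.erase j, f i x) * f' j x) volume a b := by
    intro j hj
    refine (ContinuousOn.mul ?_ (hf' j hj)).intervalIntegrable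
    exact continuousOn_finsetProd _ fun i hi x hx =>
      (hf i (mem_of_mem_erase hi) x hx).continuousAt.continuousWithinAt
  rw [← integral_finsetSum hint]
  have hsum := IntervalIntegrable.sum K hint
  rw [Finset.sum_fn] at hsum
  refine integral_eq_sub_of_hasDerivAt (f := fun x => ∏ i ∈ K, f i x) (fun x hx => ?_) hsum
  simpa only [smul_eq_mul] using HasDerivAt.fun_finsetProd fun i hi => hf i hi x hx

theorem hasDerivAt_log_mul_add_one {c x : ℝ} (h : 0 < c * x + 1) :
    HasDerivAt (fun u => Real.log (c * u + 1)) (c / (c * x + 1)) x := by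
  simpa using (((hasDerivAt_id x).const_mul c).add_const 1).log h.ne'

theorem continuousOn_prod_log_mul_add_one {ι : Type*} (S : Finset ι) {c : ι → ℝ}
    (hc : ∀ i ∈ S, 0 ≤ c i) :
    ContinuousOn (fun u => ∏ i ∈ S, Real.log (c i * u + 1)) (Set.Ici 0) :=
  continuousOn_finsetProd S fun i hi u hu =>
    (hasDerivAt_log_mul_add_one (by nlinarith [hc i hi, Set.mem_Ici.mp hu])).continuousAt
      |>.continuousWithinAt

theorem continuousOn_div_mul_add_one {a : ℝ} (ha : 0 ≤ a) :
    ContinuousOn (fun u => a / (a * u + 1)) (Set.Ici 0) :=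
  continuousOn_const.div (by fun_prop) fun u hu => by nlinarith [Set.mem_Ici.mp hu]

theorem integral_prod_log_mul_deriv_le {ι : Type*} (S : Finset ι) {b : ι → ℝ}
    (hb : ∀ i ∈ S, 0 ≤ b i) {c r : ℝ} (hc : 0 < c) (hr : 0 ≤ r) :
    ∫ u in (0:ℝ)..r, (∏ i ∈ S, Real.log (b i / 2 * u + 1)) * (c / 2 / (c / 2 * u + 1)) ≤
      ∫ v in (0:ℝ)..r * c, 1 / (v + 1) * ∏ i ∈ S, Real.log (b i * v / (2 * c) + 1) := by
  have hIcc : Set.uIcc 0 r ⊆ Set.Ici 0 := by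
    rw [Set.uIcc_of_le hr]; exact Set.Icc_subset_Ici_self
  have hprod := (continuousOn_prod_log_mul_add_one S fun i hi =>
    div_nonneg (hb i hi) two_pos.le).mono hIcc
  have hquot {a : ℝ} (ha : 0 < a) := (continuousOn_div_mul_add_one ha.le).mono hIcc
  calc ∫ u in (0:ℝ)..r, (∏ i ∈ S, Real.log (b i / 2 * u + 1)) * (c / 2 / (c / 2 * u + 1))
      ≤ ∫ u in (0:ℝ)..r, (∏ i ∈ S, Real.log (b i / 2 * u + 1)) * (c / (c * u + 1)) := by
        refine integral_mono_on hr (hprod.mul (hquot (half_pos hc))).intervalIntegrable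
          (hprod.mul (hquot hc)).intervalIntegrable fun u hu => ?_
        have hcu : 0 ≤ c * u := mul_nonneg hc.le hu.1
        refine mul_le_mul_of_nonneg_left ?_ (prod_nonneg fun i hi => Real.log_nonneg ?_)
        · rw [div_div, div_le_div_iff_of_pos_left hc (by nlinarith) (by nlinarith)]
          linarith
        · nlinarith [hb i hi, hu.1]
    _ = ∫ u in (0:ℝ)..r,
          c * (1 / (c * u + 1) * ∏ i ∈ S, Real.log (b i * (c * u) / (2 * c) + 1)) := by
        refine integral_congr fun u _ => ?_
        have hsub (i : ι) : b i * (c * u) / (2 * c) = b i / 2 * u := by field_simp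
        simp only [hsub]
        ring
    _ = ∫ v in (0:ℝ)..r * c, 1 / (v + 1) * ∏ i ∈ S, Real.log (b i * v / (2 * c) + 1) := by
        rw [intervalIntegral.integral_const_mul, ← smul_eq_mul,
          smul_integral_comp_mul_left
            (fun v => 1 / (v + 1) * ∏ i ∈ S, Real.log (b i * v / (2 * c) + 1)),
          mul_zero, mul_comm c r]

theorem prod_log_le_sum_integral {ι : Type*} [DecidableEq ι] {K : Finset ι} (hK : K.Nonempty)
    {c : ι → ℝ} (hc : ∀ i ∈ K, 0 < c i) {r : ℝ} (hr : 0 ≤ r) :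
    ∏ i ∈ K, Real.log (r * c i / 2 + 1) ≤
      ∑ j ∈ K, ∫ v in (0:ℝ)..r * c j,
        1 / (v + 1) * ∏ i ∈ K.erase j, Real.log (c i * v / (2 * c j) + 1) := by
  have hIcc : Set.uIcc 0 r ⊆ Set.Ici 0 := by
    rw [Set.uIcc_of_le hr]; exact Set.Icc_subset_Ici_self
  have hderiv : ∀ i ∈ K, ∀ u ∈ Set.uIcc 0 r, HasDerivAt (fun u => Real.log (c i / 2 * u + 1))
      (c i / 2 / (c i / 2 * u + 1)) u := fun i hi u hu =>
    hasDerivAt_log_mul_add_one (by nlinarith [hc i hi, Set.mem_Ici.mp (hIcc hu)])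
  have hcont : ∀ i ∈ K, ContinuousOn (fun u => c i / 2 / (c i / 2 * u + 1)) (Set.uIcc 0 r) :=
    fun i hi => (continuousOn_div_mul_add_one (half_pos (hc i hi)).le).mono hIcc
  have hstart : ∏ i ∈ K, Real.log (c i / 2 * 0 + 1) = 0 :=
    prod_eq_zero hK.choose_spec (by simp)
  calc ∏ i ∈ K, Real.log (r * c i / 2 + 1)
      = ∏ i ∈ K, Real.log (c i / 2 * r + 1) - ∏ i ∈ K, Real.log (c i / 2 * 0 + 1) := by
        rw [hstart, sub_zero]
        ring_nf
    _ = ∑ j ∈ K, ∫ u in (0:ℝ)..r,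
          (∏ i ∈ K.erase j, Real.log (c i / 2 * u + 1)) * (c j / 2 / (c j / 2 * u + 1)) :=
        (sum_integral_prod_erase_mul_deriv K hderiv hcont).symm
    _ ≤ _ := sum_le_sum fun j hj => integral_prod_log_mul_deriv_le _
        (fun i hi => (hc i (mem_of_mem_erase hi)).le) (hc j hj) hr

theorem stmt_17_general (d : ℕ) (r : ℝ) (hr : 0 < r)
    (m : Fin d → ℕ) (hm : ∀ i, 1 ≤ m i) (K : Finset (Fin d))
    (hKne : K.Nonempty) :
    ∃ k ∈ K,
      (1 / (K.card : ℝ)) * ∏ i ∈ K, Real.log (r * m i / 2 + 1) ≤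
        ∫ v in (0:ℝ)..(r * m k),
          (1 / (v + 1)) * ∏ i ∈ K.erase k, Real.log ((m i : ℝ) * v / (2 * m k) + 1) := by
  have hcard : (K.card : ℝ) ≠ 0 := by exact_mod_cast hKne.card_pos.ne'
  refine exists_le_of_sum_le hKne ?_
  rw [sum_const, nsmul_eq_mul, ← mul_assoc, mul_one_div_cancel hcard, one_mul]
  exact prod_log_le_sum_integral hKne (fun i _ => by exact_mod_cast hm i) hr.le

theorem stmt_17 (d : ℕ) (hd : 2 ≤ d) (r : ℝ) (hr : 0 < r)
    (m : Fin d → ℕ) (hm : ∀ i, 1 ≤ m i) (K : Finset (Fin d))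
    (hK : K = Finset.univ.filter fun i =>
      1 ≤ Real.log ((r * m i + 1) / (4 * Real.exp d)))
    (hKne : K.Nonempty) :
    ∃ k ∈ K,
      (1 / (K.card : ℝ)) * ∏ i ∈ K, Real.log (r * m i / 2 + 1) ≤
        ∫ v in (0:ℝ)..(r * m k),
          (1 / (v + 1)) * ∏ i ∈ K.erase k, Real.log ((m i : ℝ) * v / (2 * m k) + 1) :=
  stmt_17_general d r hr m hm K hKne
end
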